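/- arXiv:1411.6853 — 10 statements merged into one kernel-verified Lean document; each statement's English description precedes it below -/
import Mathlib

section
/- If nonnegative integers b_1, ..., b_k satisfy 1/2^{b_1} + ... + 1/2^{b_k} ≥ 1, then the tuple (2^{b_1}, ..., 2^{b_k}) is good: there exist sets S_1, ..., S_k ⊆ ℤ with S_1 ∪ ... ∪ S_k = ℤ such that any two distinct elements of S_i differ by at least 2^{b_i}. -/
/-!
Write the hypothesis as `2 ^ M ≤ ∑ i, 2 ^ (M - b i)` with `M = max b`, and induct on `M`. If some
`b i = 0`, let `S i = ℤ`. Otherwise the weights `2 ^ (M - b i)` are powers of two dividing `2 ^ (M - 1)`,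
so some subfamily `A` has weight exactly `2 ^ (M - 1)` and the rest has weight at least `2 ^ (M - 1)`.
By induction both halves cover `ℤ` with gaps `2 ^ (b i - 1)`; placing the cover from `A` on the even
integers and the other one on the odd integers doubles every gap.
-/

open Finset

variable {ι : Type*}

def IsGood (s : Finset ι) (a : ι → ℤ) : Prop :=
  ∃ S : ι → Set ℤ, (⋃ i ∈ s, S i) = Set.univ ∧
    ∀ i ∈ s, (S i).Pairwise fun t₁ t₂ => a i ≤ |t₁ - t₂|

namespace IsGood

theorem mono {s : Finset ι} {a a' : ι → ℤ} (h : IsGood s a) (ha : ∀ i ∈ s, a' i ≤ a i) :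
    IsGood s a' := by
  obtain ⟨S, hcover, hsep⟩ := h
  exact ⟨S, hcover, fun i hi => (hsep i hi).imp fun _ _ h => (ha i hi).trans h⟩

theorem of_le_one {s : Finset ι} {a : ι → ℤ} {i₀ : ι} (hi₀ : i₀ ∈ s) (ha : a i₀ ≤ 1) :
    IsGood s a := by
  classical
  refine ⟨fun i => if i = i₀ then Set.univ else ∅, ?_, ?_⟩
  · exact Set.eq_univ_of_forall fun x => Set.mem_biUnion hi₀ (by simp)
  · intro i _ t₁ ht₁ t₂ _ hne
    obtain rfl : i = i₀ := by by_contra h; simp [h] at ht₁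
    exact ha.trans (Int.one_le_abs (sub_ne_zero.mpr hne))

end IsGood

theorem Set.Pairwise.image_two_mul_add {S : Set ℤ} {c : ℤ} (r : ℤ)
    (h : S.Pairwise fun t₁ t₂ => c ≤ |t₁ - t₂|) :
    ((fun x => 2 * x + r) '' S).Pairwise fun t₁ t₂ => 2 * c ≤ |t₁ - t₂| := by
  rintro _ ⟨x, hx, rfl⟩ _ ⟨y, hy, rfl⟩ hne
  have hxy : x ≠ y := fun h => hne (h ▸ rfl)
  have hdist : |2 * x + r - (2 * y + r)| = 2 * |x - y| := by
    rw [show 2 * x + r - (2 * y + r) = 2 * (x - y) by ring, abs_mul, abs_two]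
  rw [hdist]
  linarith [h hx hy hxy]

theorem IsGood.union_two_mul [DecidableEq ι] {A B : Finset ι} {a : ι → ℤ} (hAB : Disjoint A B)
    (hA : IsGood A a) (hB : IsGood B a) : IsGood (A ∪ B) fun i => 2 * a i := by
  obtain ⟨S₁, hcover₁, hsep₁⟩ := hA
  obtain ⟨S₂, hcover₂, hsep₂⟩ := hB
  refine ⟨fun i => if i ∈ A then (fun x => 2 * x + 0) '' S₁ i else (fun x => 2 * x + 1) '' S₂ i,
    Set.eq_univ_of_forall fun z => ?_, fun i hi => ?_⟩
  · obtain ⟨x, rfl | rfl⟩ := Int.even_or_odd' z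
    · obtain ⟨i, hi, hx⟩ := Set.mem_iUnion₂.mp (hcover₁.symm ▸ Set.mem_univ x)
      exact Set.mem_biUnion (mem_union_left B hi) (by rw [if_pos hi]; exact ⟨x, hx, add_zero _⟩)
    · obtain ⟨i, hi, hx⟩ := Set.mem_iUnion₂.mp (hcover₂.symm ▸ Set.mem_univ x)
      exact Set.mem_biUnion (mem_union_right A hi)
        (by rw [if_neg (disjoint_right.mp hAB hi)]; exact ⟨x, hx, rfl⟩)
  · by_cases hiA : i ∈ A
    · simpa only [hiA, if_true] using (hsep₁ i hiA).image_two_mul_add 0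
    · have hiB : i ∈ B := (mem_union.mp hi).resolve_left hiA
      simpa only [hiA, if_false] using (hsep₂ i hiB).image_two_mul_add 1

theorem exists_subset_sum_two_pow_eq [DecidableEq ι] (e : ι → ℕ) (s : Finset ι) :
    ∀ W : ℕ, (∀ i ∈ s, 2 ^ e i ∣ W) → W ≤ ∑ i ∈ s, 2 ^ e i →
      ∃ A ⊆ s, ∑ i ∈ A, 2 ^ e i = W := by
  induction s using Finset.induction_on_max_value e with
  | empty => exact fun W _ hW => ⟨∅, subset_rfl, by simp_all⟩
  | insert a s has hmax ih =>
    intro W hdvd hW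
    rcases Nat.eq_zero_or_pos W with rfl | hWpos
    · exact ⟨∅, empty_subset _, sum_empty⟩
    -- greedily take the largest weight: it divides `W`, hence fits into it
    have hle : 2 ^ e a ≤ W := Nat.le_of_dvd hWpos (hdvd a (mem_insert_self a s))
    have hdvd' : ∀ i ∈ s, 2 ^ e i ∣ W - 2 ^ e a := fun i hi =>
      Nat.dvd_sub (hdvd i (mem_insert_of_mem hi)) (pow_dvd_pow 2 (hmax i hi))
    rw [sum_insert has] at hW
    obtain ⟨A, hAs, hA⟩ := ih (W - 2 ^ e a) hdvd' (by omega)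
    refine ⟨insert a A, insert_subset_insert a hAs, ?_⟩
    rw [sum_insert fun haA => has (hAs haA), hA]
    omega

theorem isGood_two_pow_of_two_pow_le_sum [DecidableEq ι] (M : ℕ) (s : Finset ι) (b : ι → ℕ)
    (hbM : ∀ i ∈ s, b i ≤ M) (hsum : 2 ^ M ≤ ∑ i ∈ s, 2 ^ (M - b i)) :
    IsGood s fun i => 2 ^ b i := by
  induction M generalizing s b with
  | zero =>
    obtain ⟨i, hi⟩ : s.Nonempty := nonempty_of_sum_ne_zero (f := fun i => 2 ^ (0 - b i)) (by omega)
    exact IsGood.of_le_one hi (by simp [Nat.le_zero.mp (hbM i hi)])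
  | succ M ih =>
    by_cases hzero : ∃ i ∈ s, b i = 0
    · obtain ⟨i, hi, hbi⟩ := hzero
      exact IsGood.of_le_one hi (by simp [hbi])
    push Not at hzero
    have hexp : ∀ i ∈ s, M - (b i - 1) = M + 1 - b i := fun i hi => by
      have := hzero i hi; omega
    obtain ⟨A, hAs, hA⟩ := exists_subset_sum_two_pow_eq (fun i => M + 1 - b i) s (2 ^ M)
      (fun i hi => pow_dvd_pow 2 (by have := hzero i hi; omega))
      ((Nat.pow_le_pow_right two_pos M.le_succ).trans hsum)
    have hsplit := sum_sdiff hAs (f := fun i => 2 ^ (M + 1 - b i))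
    have hgoodA : IsGood A fun i => 2 ^ (b i - 1) :=
      ih A _ (fun i hi => by have := hbM i (hAs hi); omega)
        (by rw [sum_congr rfl fun i hi => by rw [hexp i (hAs hi)]]; omega)
    have hgoodB : IsGood (s \ A) fun i => 2 ^ (b i - 1) :=
      ih (s \ A) _ (fun i hi => by have := hbM i (mem_sdiff.mp hi).1; omega)
        (by
          rw [sum_congr rfl fun i hi => by rw [hexp i (mem_sdiff.mp hi).1]]
          rw [pow_succ] at hsum
          omega)
    have hgood := hgoodA.union_two_mul disjoint_sdiff hgoodB
    rw [union_sdiff_of_subset hAs] at hgood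
    refine hgood.mono fun i hi => le_of_eq ?_
    rw [← pow_succ', Nat.sub_add_cancel (Nat.one_le_iff_ne_zero.mpr (hzero i hi))]

/-- if `∑ 1/2^(b i) ≥ 1` then `(2^(b 1), …, 2^(b k))` is good. -/
theorem stmt_1 (k : ℕ) (b : Fin k → ℕ)
    (hsum : (1 : ℝ) ≤ ∑ i, (1 : ℝ) / 2 ^ (b i)) :
    ∃ S : Fin k → Set ℤ, (⋃ i, S i) = Set.univ ∧
      ∀ i, ∀ t₁ ∈ S i, ∀ t₂ ∈ S i, t₁ ≠ t₂ → ((2 ^ (b i) : ℤ) ≤ |t₁ - t₂|) := by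
  set M := univ.sup b
  have hbM : ∀ i ∈ univ, b i ≤ M := fun i hi => le_sup hi
  have hsumM : 2 ^ M ≤ ∑ i, 2 ^ (M - b i) := by
    have : (2 : ℝ) ^ M ≤ ∑ i, (2 : ℝ) ^ (M - b i) := by
      calc (2 : ℝ) ^ M ≤ 2 ^ M * ∑ i, 1 / 2 ^ b i := le_mul_of_one_le_right (by positivity) hsum
        _ = ∑ i, (2 : ℝ) ^ (M - b i) := by
          rw [mul_sum]
          exact sum_congr rfl fun i hi => by rw [pow_sub₀ _ two_ne_zero (hbM i hi)]; ring
    exact_mod_cast this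
  obtain ⟨S, hcover, hsep⟩ := isGood_two_pow_of_two_pow_le_sum M univ b hbM hsumM
  exact ⟨S, by simpa using hcover, fun i => hsep i (mem_univ i)⟩
end

section
/- If positive integers a_1, ..., a_k satisfy 1/a_1 + ... + 1/a_k ≥ 2, then the tuple (a_1, ..., a_k) is good: there exist sets S_1, ..., S_k ⊆ ℤ with union ℤ such that any two distinct elements of S_i differ by at least a_i. -/
/-!
Rounding each `a i` up to a power of two `2 ^ e i < 2 * a i` turns the hypothesis into the Kraft
inequality `∑ 2 ^ (-e i) ≥ 1`, and under that inequality residue classes `r i mod 2 ^ e i` can be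
chosen to cover `ℤ`. Induct on the number of classes: if two classes have the largest modulus
`2 ^ (n + 1)`, cover with one class modulo `2 ^ n` in their place and split it into two; if only one
does, drop it, since the remaining sum is a multiple of `2 ^ (-n)` short of `1` by at most
`2 ^ (-n-1)`, hence still at least `1`. Distinct integers in one class modulo `2 ^ e i ≥ a i` are at
distance at least `a i`.
-/

open Finset Function

lemma Nat.le_of_dvd_of_le_add_of_lt {d x y c : ℕ} (hx : d ∣ x) (hy : d ∣ y) (h : x ≤ y + c)
    (hc : c < d) : x ≤ y := by
  obtain ⟨u, rfl⟩ := hx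
  obtain ⟨v, rfl⟩ := hy
  have : d * u < d * (v + 1) := by rw [mul_add_one]; omega
  exact Nat.mul_le_mul_left d (Nat.lt_succ_iff.1 (Nat.lt_of_mul_lt_mul_left this))

lemma Int.two_pow_succ_dvd_or_two_pow_succ_dvd_sub {x : ℤ} {n : ℕ} (h : 2 ^ n ∣ x) :
    2 ^ (n + 1) ∣ x ∨ 2 ^ (n + 1) ∣ x - 2 ^ n := by
  obtain ⟨c, rfl⟩ := h
  rcases Int.even_or_odd' c with ⟨d, rfl | rfl⟩
  · exact .inl ⟨d, by ring⟩
  · exact .inr ⟨d, by ring⟩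

lemma Nat.two_pow_clog_lt {a : ℕ} (ha : 0 < a) : 2 ^ Nat.clog 2 a < 2 * a := by
  rcases Nat.lt_or_ge 1 a with h | h
  · have hpos := Nat.clog_pos one_lt_two h
    have := Nat.pred_eq_sub_one ▸ Nat.pow_pred_clog_lt_self one_lt_two h
    calc 2 ^ Nat.clog 2 a = 2 * 2 ^ (Nat.clog 2 a - 1) := by
          rw [← pow_succ']; congr 1; omega
      _ < 2 * a := by omega
  · obtain rfl : a = 1 := by omega
    simp

section DyadicCover

variable {ι : Type*}

def IsDyadicCover (s : Finset ι) (e : ι → ℕ) (r : ι → ℤ) : Prop :=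
  ∀ t : ℤ, ∃ i ∈ s, (2 : ℤ) ^ e i ∣ t - r i

lemma IsDyadicCover.mono {s s' : Finset ι} {e : ι → ℕ} {r : ι → ℤ} (h : IsDyadicCover s e r)
    (hs : s ⊆ s') : IsDyadicCover s' e r := fun t =>
  let ⟨i, hi, hdvd⟩ := h t
  ⟨i, hs hi, hdvd⟩

variable [DecidableEq ι]

lemma IsDyadicCover.of_erase_update {s : Finset ι} {e : ι → ℕ} {r : ι → ℤ} {i j : ι} {n : ℕ}
    (hij : i ≠ j) (hj : j ∈ s) (hei : e i = n + 1) (hej : e j = n + 1)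
    (h : IsDyadicCover (s.erase j) (update e i n) r) :
    IsDyadicCover s e (update r j (r i + 2 ^ n)) := by
  intro t
  obtain ⟨x, hx, hdvd⟩ := h t
  have hxj := ne_of_mem_erase hx
  by_cases hxi : x = i
  · subst hxi
    rw [update_self] at hdvd
    rcases Int.two_pow_succ_dvd_or_two_pow_succ_dvd_sub hdvd with h | h
    · exact ⟨x, mem_of_mem_erase hx, by rwa [hei, update_of_ne hxj]⟩
    · exact ⟨j, hj, by rwa [hej, update_self, sub_add_eq_sub_sub]⟩
  · exact ⟨x, mem_of_mem_erase hx, by rwa [update_of_ne hxj, ← update_of_ne hxi n e]⟩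

lemma sum_erase_update_two_pow_sub {s : Finset ι} {e : ι → ℕ} {i j : ι} {n E : ℕ} (hij : i ≠ j)
    (hi : i ∈ s) (hj : j ∈ s) (hei : e i = n + 1) (hej : e j = n + 1) (hE : n + 1 ≤ E) :
    ∑ x ∈ s.erase j, 2 ^ (E - update e i n x) = ∑ x ∈ s, 2 ^ (E - e x) := by
  have hi' : i ∈ s.erase j := mem_erase.2 ⟨hij, hi⟩
  rw [← add_sum_erase s _ hj, ← add_sum_erase _ _ hi', ← add_sum_erase _ _ hi', update_self,
    hei, hej, ← add_assoc]
  congr 1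
  · rw [← two_mul, ← pow_succ']
    congr 1
    omega
  · exact sum_congr rfl fun x hx => by rw [update_of_ne (ne_of_mem_erase hx)]

lemma le_sum_erase_two_pow_sub {s : Finset ι} {e : ι → ℕ} {i : ι} {n E : ℕ} (hi : i ∈ s)
    (hei : e i = n + 1) (hE : n + 1 ≤ E) (hlt : ∀ x ∈ s.erase i, e x ≤ n)
    (h : 2 ^ E ≤ ∑ x ∈ s, 2 ^ (E - e x)) : 2 ^ E ≤ ∑ x ∈ s.erase i, 2 ^ (E - e x) := by
  rw [← add_sum_erase s _ hi, hei] at h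
  refine Nat.le_of_dvd_of_le_add_of_lt (d := 2 ^ (E - n)) (c := 2 ^ (E - (n + 1)))
    (pow_dvd_pow 2 (by omega)) (dvd_sum fun x hx => pow_dvd_pow 2 (by have := hlt x hx; omega))
    (by omega)
    (Nat.pow_lt_pow_right one_lt_two (by omega))

theorem exists_isDyadicCover (s : Finset ι) (e : ι → ℕ) (E : ℕ) (hle : ∀ i ∈ s, e i ≤ E)
    (hsum : 2 ^ E ≤ ∑ i ∈ s, 2 ^ (E - e i)) : ∃ r, IsDyadicCover s e r := by
  induction s using Finset.strongInduction generalizing e with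
  | H s ih =>
  rcases s.eq_empty_or_nonempty with rfl | hne
  · simp at hsum
  by_cases h0 : ∃ i ∈ s, e i = 0
  · obtain ⟨i, hi, hei⟩ := h0
    exact ⟨0, fun t => ⟨i, hi, by simp [hei]⟩⟩
  obtain ⟨i, hi, hmax⟩ := exists_max_image s e hne
  obtain ⟨n, hn⟩ := Nat.exists_eq_add_one_of_ne_zero fun h => h0 ⟨i, hi, h⟩
  have hE : n + 1 ≤ E := hn ▸ hle i hi
  by_cases htie : ∃ j ∈ s, j ≠ i ∧ e j = n + 1
  · obtain ⟨j, hj, hji, hej⟩ := htie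
    have hle' : ∀ x ∈ s.erase j, update e i n x ≤ E := fun x hx => by
      have := hle x (mem_of_mem_erase hx)
      rw [update_apply]; split_ifs <;> omega
    obtain ⟨r, hr⟩ := ih (s.erase j) (erase_ssubset hj) (update e i n) hle'
      (by rwa [sum_erase_update_two_pow_sub hji.symm hi hj hn hej hE])
    exact ⟨_, hr.of_erase_update hji.symm hj hn hej⟩
  · have hlt : ∀ x ∈ s.erase i, e x ≤ n := fun x hx => by
      have := hmax x (mem_of_mem_erase hx)
      have : e x ≠ n + 1 := fun h => htie ⟨x, mem_of_mem_erase hx, ne_of_mem_erase hx, h⟩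
      omega
    obtain ⟨r, hr⟩ := ih (s.erase i) (erase_ssubset hi) e
      (fun x hx => hle x (mem_of_mem_erase hx)) (le_sum_erase_two_pow_sub hi hn hE hlt hsum)
    exact ⟨r, hr.mono (erase_subset i s)⟩

end DyadicCover

lemma two_pow_le_sum_two_pow_sub {ι : Type*} {s : Finset ι} {e : ι → ℕ} {E : ℕ}
    (hle : ∀ i ∈ s, e i ≤ E) (h : 1 ≤ ∑ i ∈ s, ((2 : ℝ) ^ e i)⁻¹) :
    2 ^ E ≤ ∑ i ∈ s, 2 ^ (E - e i) := by
  have hcast : ((∑ i ∈ s, 2 ^ (E - e i) : ℕ) : ℝ) = 2 ^ E * ∑ i ∈ s, ((2 : ℝ) ^ e i)⁻¹ := by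
    push_cast
    rw [mul_sum]
    exact sum_congr rfl fun i hi => pow_sub₀ _ two_ne_zero (hle i hi)
  exact_mod_cast (le_mul_of_one_le_right (by positivity) h).trans_eq hcast.symm

lemma one_le_sum_inv_two_pow_clog {ι : Type*} {s : Finset ι} {a : ι → ℕ} (ha : ∀ i ∈ s, 0 < a i)
    (hsum : 2 ≤ ∑ i ∈ s, (1 : ℝ) / a i) : 1 ≤ ∑ i ∈ s, ((2 : ℝ) ^ Nat.clog 2 (a i))⁻¹ := by
  have hterm : ∀ i ∈ s, (1 : ℝ) / a i ≤ 2 * ((2 : ℝ) ^ Nat.clog 2 (a i))⁻¹ := fun i hi => by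
    have hai : (0 : ℝ) < a i := by exact_mod_cast ha i hi
    have hlt : ((2 ^ Nat.clog 2 (a i) : ℕ) : ℝ) < 2 * a i := by
      exact_mod_cast Nat.two_pow_clog_lt (ha i hi)
    push_cast at hlt
    rw [one_div, ← div_eq_mul_inv, le_div_iff₀ (by positivity), inv_mul_eq_div,
      div_le_iff₀ hai]
    linarith
  have := hsum.trans (sum_le_sum hterm)
  rw [← mul_sum] at this
  linarith

/-- if `∑ 1/(a i) ≥ 2` then `(a 1, …, a k)` is good. -/
theorem stmt_2 (k : ℕ) (a : Fin k → ℕ) (ha : ∀ i, 0 < a i)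
    (hsum : (2 : ℝ) ≤ ∑ i, (1 : ℝ) / a i) :
    ∃ S : Fin k → Set ℤ, (⋃ i, S i) = Set.univ ∧
      ∀ i, ∀ t₁ ∈ S i, ∀ t₂ ∈ S i, t₁ ≠ t₂ → ((a i : ℤ) ≤ |t₁ - t₂|) := by
  set e : Fin k → ℕ := fun i => Nat.clog 2 (a i)
  have hle : ∀ i ∈ univ, e i ≤ univ.sup e := fun i hi => le_sup hi
  obtain ⟨r, hr⟩ := exists_isDyadicCover univ e _ hle
    (two_pow_le_sum_two_pow_sub hle (one_le_sum_inv_two_pow_clog (fun i _ => ha i) hsum))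
  refine ⟨fun i => {t | (2 : ℤ) ^ e i ∣ t - r i}, ?_, fun i t₁ h₁ t₂ h₂ hne => ?_⟩
  · refine Set.eq_univ_of_forall fun t => ?_
    obtain ⟨i, -, hi⟩ := hr t
    exact Set.mem_iUnion.2 ⟨i, hi⟩
  · have hdvd : (2 : ℤ) ^ e i ∣ t₁ - t₂ := by simpa using dvd_sub h₁ h₂
    calc (a i : ℤ) ≤ 2 ^ e i := by exact_mod_cast Nat.le_pow_clog one_lt_two _
      _ ≤ |t₁ - t₂| := Int.le_of_dvd (abs_pos.2 (sub_ne_zero.2 hne)) ((dvd_abs _ _).2 hdvd)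
end

section
/- For every k ≥ 0, the tuple (2^0+1, 2^1+1, 2^2+1, ..., 2^k+1) = (2, 3, 5, ..., 2^k+1) is bad: there are no sets S_0, ..., S_k ⊆ ℤ with union ℤ such that any two distinct elements of S_i differ by at least 2^i + 1. -/
/-!
Every block of `2 ^ n` consecutive integers contains a point missed by `S 0, …, S (n-1)`.
For the inductive step, take such a point `t₁` in a first block and a second one `t₂` in the
block of length `2 ^ n` just after `t₁`; then `0 < t₂ - t₁ ≤ 2 ^ n`, so the set `S n`, whose
points are more than `2 ^ n` apart, misses one of them. With `n = k + 1` no family covers `ℤ`.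
-/

open Set

theorem exists_mem_Ico_forall_notMem {n : ℕ} (S : Fin n → Set ℤ)
    (hS : ∀ i, (S i).Pairwise fun a b => (2 : ℤ) ^ (i : ℕ) + 1 ≤ |a - b|) (x : ℤ) :
    ∃ t ∈ Ico x (x + 2 ^ n), ∀ i, t ∉ S i := by
  induction n generalizing x with
  | zero => exact ⟨x, by simp, fun i => i.elim0⟩
  | succ n ih =>
    have hS' : ∀ i : Fin n, (S i.castSucc).Pairwise fun a b => (2 : ℤ) ^ (i : ℕ) + 1 ≤ |a - b| :=
      fun i => hS i.castSucc
    obtain ⟨t₁, ⟨hx₁, h₁x⟩, ht₁⟩ := ih (S ∘ Fin.castSucc) hS' x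
    obtain ⟨t₂, ⟨ht₁₂, h₂t₁⟩, ht₂⟩ := ih (S ∘ Fin.castSucc) hS' (t₁ + 1)
    have hpow : (2 : ℤ) ^ (n + 1) = 2 ^ n + 2 ^ n := by ring
    have not_both : t₁ ∉ S (Fin.last n) ∨ t₂ ∉ S (Fin.last n) := by
      by_contra! ⟨h₁, h₂⟩
      have hgap := hS (Fin.last n) h₁ h₂ (by omega)
      rw [Fin.val_last, abs_of_neg (by linarith)] at hgap
      linarith
    have avoid_all {t : ℤ} (hinit : ∀ i : Fin n, t ∉ S i.castSucc) (hlast : t ∉ S (Fin.last n)) :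
        ∀ i, t ∉ S i :=
      Fin.lastCases hlast hinit
    rcases not_both with h₁ | h₂
    · exact ⟨t₁, ⟨hx₁, by linarith⟩, avoid_all ht₁ h₁⟩
    · exact ⟨t₂, ⟨by linarith, by linarith⟩, avoid_all ht₂ h₂⟩

/-- the tuple `(2^0+1, 2^1+1, …, 2^k+1)` is bad. -/
theorem stmt_4 (k : ℕ) :
    ¬ ∃ S : Fin (k + 1) → Set ℤ, (⋃ i, S i) = Set.univ ∧
      ∀ i, ∀ t₁ ∈ S i, ∀ t₂ ∈ S i, t₁ ≠ t₂ → ((2 ^ (i : ℕ) + 1 : ℤ) ≤ |t₁ - t₂|) := by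
  rintro ⟨S, hcover, hgap⟩
  obtain ⟨t, -, hmiss⟩ := exists_mem_Ico_forall_notMem S hgap 0
  obtain ⟨i, hi⟩ := mem_iUnion.mp (hcover ▸ mem_univ t)
  exact hmiss i hi
end

section
/- For every k ≥ 0 and every choice of sets S_0, ..., S_k ⊆ ℤ such that any two distinct elements of S_i differ by at least 2^i + 1, there is at least one integer t with 1 ≤ t ≤ 2^{k+1} that belongs to none of the sets S_0, ..., S_k. -/
lemma notMem_or_notMem_of_lt_of_separated {s : Set ℤ} {d : ℤ}
    (hs : ∀ x ∈ s, ∀ y ∈ s, x ≠ y → d ≤ |x - y|) {x y : ℤ} (hxy : x < y) (hd : y - x < d) :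
    x ∉ s ∨ y ∉ s := by
  by_contra! h
  have := hs x h.1 y h.2 hxy.ne
  rw [abs_sub_comm, abs_of_pos (sub_pos.mpr hxy)] at this
  omega

/-- Doubling: a free time in each of two consecutive windows of length `2 ^ n` for the first `n`
agents gives two times less than `2 ^ n + 1` apart, which agent `n` cannot both visit. -/
lemma exists_mem_Ioc_forall_notMem (n : ℕ) (S : Fin n → Set ℤ)
    (hsep : ∀ i, ∀ t₁ ∈ S i, ∀ t₂ ∈ S i, t₁ ≠ t₂ → ((2 ^ (i : ℕ) + 1 : ℤ) ≤ |t₁ - t₂|))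
    (a : ℤ) : ∃ t ∈ Set.Ioc a (a + 2 ^ n), ∀ i, t ∉ S i := by
  induction n generalizing a with
  | zero => exact ⟨a + 1, by simp, fun i => i.elim0⟩
  | succ n ih =>
    have hsep' := fun i : Fin n => hsep i.castSucc
    obtain ⟨t₁, ⟨ha₁, h₁⟩, hS₁⟩ := ih (S ∘ Fin.castSucc) hsep' a
    obtain ⟨t₂, ⟨h₁₂, h₂⟩, hS₂⟩ := ih (S ∘ Fin.castSucc) hsep' t₁
    have hpow : (2 : ℤ) ^ (n + 1) = 2 ^ n + 2 ^ n := by ring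
    have hgap : t₂ - t₁ < 2 ^ (Fin.last n : ℕ) + 1 := by rw [Fin.val_last]; omega
    rcases notMem_or_notMem_of_lt_of_separated (hsep (Fin.last n)) h₁₂ hgap with hlast | hlast
    · exact ⟨t₁, ⟨ha₁, by omega⟩, Fin.lastCases hlast hS₁⟩
    · exact ⟨t₂, ⟨by omega, by omega⟩, Fin.lastCases hlast hS₂⟩

/-- for agents with revisit intervals `2^i + 1` (`0 ≤ i ≤ k`),
some integer `t` with `1 ≤ t ≤ 2^(k+1)` is visited by no agent. -/
theorem stmt_5 (k : ℕ) (S : Fin (k + 1) → Set ℤ)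
    (hsep : ∀ i, ∀ t₁ ∈ S i, ∀ t₂ ∈ S i, t₁ ≠ t₂ → ((2 ^ (i : ℕ) + 1 : ℤ) ≤ |t₁ - t₂|)) :
    ∃ t : ℤ, 1 ≤ t ∧ t ≤ 2 ^ (k + 1) ∧ ∀ i, t ∉ S i := by
  obtain ⟨t, ⟨ht₀, ht⟩, hS⟩ := exists_mem_Ioc_forall_notMem (k + 1) S hsep 0
  exact ⟨t, ht₀, by simpa using ht, hS⟩
end

section
/- Let a_1, ..., a_k be positive reals and T > 0. Agents with minimum revisit intervals a_1, ..., a_k can patrol a point with idle time T (i.e., there exist sets S_1, ..., S_k ⊆ ℝ such that distinct elements of S_i differ by at least a_i, and every half-open interval [t, t+T) with t ∈ ℝ contains an element of some S_i) if and only if the integer tuple (⌈a_1/T⌉, ..., ⌈a_k/T⌉) is good. -/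
/-!
Scaling an integer schedule by `T` gives a real one, since `⌈a / T⌉ * T ≥ a`. Conversely, the
visits of a real schedule form a locally finite set (each agent's visits are `a i`-separated and
there are finitely many agents) that is unbounded in both directions, so they can be enumerated
increasingly as `e : ℤ → ℝ`. Consecutive visits are at most `T` apart, hence
`|e m - e n| ≤ |m - n| * T`, and assigning `n` to the agent making visit `e n` is an integer
schedule: `a i ≤ |m - n| * T` forces `⌈a i / T⌉ ≤ |m - n|`.
-/

open Set

theorem finite_inter_Icc_of_pairwise_le_abs_sub {s : Set ℝ} {c : ℝ} (hc : 0 < c)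
    (hs : s.Pairwise fun x y => c ≤ |x - y|) (A B : ℝ) : (s ∩ Icc A B).Finite := by
  refine (finite_Icc ⌊A / c⌋ ⌊B / c⌋).of_injOn (f := fun x => ⌊x / c⌋) ?_ ?_
  · rintro x ⟨-, hAx, hxB⟩
    exact ⟨Int.floor_le_floor (by gcongr), Int.floor_le_floor (by gcongr)⟩
  · rintro x ⟨hx, -⟩ y ⟨hy, -⟩ hxy
    by_contra hne
    have hlt : |x / c - y / c| < 1 := Int.abs_sub_lt_one_of_floor_eq_floor hxy
    rw [← sub_div, abs_div, abs_of_pos hc, div_lt_one hc] at hlt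
    exact (hs hx hy hne).not_gt hlt

theorem exists_strictMono_int_range_eq {α : Type*} [LinearOrder α] {V : Set α}
    (hfin : ∀ A B, (V ∩ Icc A B).Finite) (hmax : ∀ x, ∃ v ∈ V, x < v)
    (hmin : ∀ x, ∃ v ∈ V, v < x) [Nonempty α] :
    ∃ e : ℤ → α, StrictMono e ∧ range e = V := by
  let _ : LocallyFiniteOrder V := .ofFiniteIcc fun x y =>
    ((hfin x y).preimage Subtype.val_injective.injOn).subset fun z hz => ⟨z.2, hz⟩
  let _ := LinearLocallyFiniteOrder.succOrder (ι := V)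
  let _ := LinearLocallyFiniteOrder.predOrder (ι := V)
  have : NoMaxOrder V := ⟨fun x => let ⟨v, hv, h⟩ := hmax x; ⟨⟨v, hv⟩, h⟩⟩
  have : NoMinOrder V := ⟨fun x => let ⟨v, hv, h⟩ := hmin x; ⟨⟨v, hv⟩, h⟩⟩
  have : Nonempty V := let ⟨v, hv, _⟩ := hmax (Classical.arbitrary α); ⟨⟨v, hv⟩⟩
  let f := orderIsoIntOfLinearSuccPredArch (ι := V)
  refine ⟨fun n => f.symm n, Subtype.strictMono_coe _ |>.comp f.symm.strictMono, ?_⟩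
  ext v
  exact ⟨fun ⟨n, hn⟩ => hn ▸ (f.symm n).2, fun hv => ⟨f ⟨v, hv⟩, by simp⟩⟩

theorem StrictMono.apply_add_one_le_add_of_forall_Ico {e : ℤ → ℝ} (he : StrictMono e) {T : ℝ}
    (hcov : ∀ t, ∃ v ∈ range e, v ∈ Ico t (t + T)) (n : ℤ) : e (n + 1) ≤ e n + T := by
  by_contra! hgap
  -- a window of length `T` strictly between two consecutive values would contain a third one
  obtain ⟨_, ⟨m, rfl⟩, hlo, hhi⟩ := hcov ((e n + e (n + 1) - T) / 2)
  have h₁ : n < m := he.lt_iff_lt.1 (by linarith)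
  have h₂ : m < n + 1 := he.lt_iff_lt.1 (by linarith)
  omega

theorem abs_sub_le_of_monotone_of_apply_add_one_le {e : ℤ → ℝ} (he : Monotone e) {T : ℝ}
    (hstep : ∀ n, e (n + 1) ≤ e n + T) (n m : ℤ) : |e m - e n| ≤ |(m : ℝ) - n| * T := by
  wlog hnm : n ≤ m generalizing n m
  · rw [abs_sub_comm, abs_sub_comm (m : ℝ)]
    exact this m n (le_of_not_ge hnm)
  have hanti : Antitone fun n : ℤ => e n - n * T :=
    antitone_int_of_succ_le fun n => by push_cast; linarith [hstep n]
  have hnm' : (n : ℝ) ≤ m := by exact_mod_cast hnm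
  rw [abs_of_nonneg (sub_nonneg.2 (he hnm)), abs_of_nonneg (sub_nonneg.2 hnm')]
  linarith [hanti hnm]

theorem exists_int_cover_of_patrol {ι : Type*} [Finite ι] {a : ι → ℝ} (ha : ∀ i, 0 < a i)
    {T : ℝ} (hT : 0 < T) {S : ι → Set ℝ} (hsep : ∀ i, (S i).Pairwise fun x y => a i ≤ |x - y|)
    (hcov : ∀ t, ∃ i, ∃ t' ∈ Ico t (t + T), t' ∈ S i) :
    ∃ B : ι → Set ℤ, (⋃ i, B i) = univ ∧ ∀ i, (B i).Pairwise fun n m => ⌈a i / T⌉ ≤ |n - m| := by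
  have hcovV : ∀ t, ∃ v ∈ ⋃ i, S i, v ∈ Ico t (t + T) := fun t =>
    let ⟨i, v, hv, hvS⟩ := hcov t; ⟨v, mem_iUnion.2 ⟨i, hvS⟩, hv⟩
  obtain ⟨e, he, hrange⟩ := exists_strictMono_int_range_eq
    (fun A B => by
      rw [iUnion_inter]
      exact finite_iUnion fun i => finite_inter_Icc_of_pairwise_le_abs_sub (ha i) (hsep i) A B)
    (fun x => let ⟨v, hv, hxv, _⟩ := hcovV (x + T); ⟨v, hv, by linarith⟩)
    (fun x => let ⟨v, hv, _, hvx⟩ := hcovV (x - T); ⟨v, hv, by linarith⟩)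
  rw [← hrange] at hcovV
  have hlip := abs_sub_le_of_monotone_of_apply_add_one_le he.monotone
    (he.apply_add_one_le_add_of_forall_Ico hcovV)
  choose agent hagent using fun n => mem_iUnion.1 (hrange ▸ mem_range_self n : e n ∈ ⋃ i, S i)
  refine ⟨fun i => {n | agent n = i}, iUnion_eq_univ_iff.2 fun n => ⟨agent n, rfl⟩, ?_⟩
  rintro i n rfl m hm hnm
  have hsep' := hsep _ (hagent n) (hm ▸ hagent m) (he.injective.ne hnm)
  rw [Int.ceil_le, div_le_iff₀ hT, Int.cast_abs, Int.cast_sub]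
  exact hsep'.trans (hlip m n |>.trans_eq (by rw [abs_sub_comm]))

theorem exists_patrol_of_int_cover {ι : Type*} {a : ι → ℝ} {T : ℝ} (hT : 0 < T)
    {B : ι → Set ℤ} (hB : (⋃ i, B i) = univ)
    (hsep : ∀ i, (B i).Pairwise fun n m => ⌈a i / T⌉ ≤ |n - m|) :
    ∃ S : ι → Set ℝ, (∀ i, (S i).Pairwise fun x y => a i ≤ |x - y|) ∧
      ∀ t, ∃ i, ∃ t' ∈ Ico t (t + T), t' ∈ S i := by
  refine ⟨fun i => (fun n : ℤ => n * T) '' B i, ?_, fun t => ?_⟩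
  · rintro i _ ⟨n, hn, rfl⟩ _ ⟨m, hm, rfl⟩ hne
    have hceil : ((⌈a i / T⌉ : ℤ) : ℝ) ≤ |(n : ℝ) - m| := by
      exact_mod_cast hsep i hn hm (fun h => hne (h ▸ rfl))
    rw [← sub_mul, abs_mul, abs_of_pos hT, ← div_le_iff₀ hT]
    exact (Int.le_ceil _).trans hceil
  · obtain ⟨n, hn, -⟩ := existsUnique_add_zsmul_mem_Ico hT 0 t
    obtain ⟨i, hi⟩ := mem_iUnion.1 (hB.symm ▸ mem_univ n : n ∈ ⋃ i, B i)
    exact ⟨i, n * T, by simpa using hn, n, hi, rfl⟩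

/-- agents with real minimum revisit intervals `a i` can patrol a point
with idle time `T` iff the integer tuple `(⌈a i / T⌉)` is good. -/
theorem stmt_7 (k : ℕ) (a : Fin k → ℝ) (ha : ∀ i, 0 < a i) (T : ℝ) (hT : 0 < T) :
    (∃ S : Fin k → Set ℝ,
      (∀ i, ∀ t₁ ∈ S i, ∀ t₂ ∈ S i, t₁ ≠ t₂ → a i ≤ |t₁ - t₂|) ∧
      (∀ t : ℝ, ∃ i, ∃ t' ∈ Set.Ico t (t + T), t' ∈ S i)) ↔
    (∃ S : Fin k → Set ℤ, (⋃ i, S i) = Set.univ ∧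
      ∀ i, ∀ t₁ ∈ S i, ∀ t₂ ∈ S i, t₁ ≠ t₂ → (⌈a i / T⌉ ≤ |t₁ - t₂|)) :=
  ⟨fun ⟨_, hsep, hcov⟩ => exists_int_cover_of_patrol ha hT (fun i _ hx _ hy => hsep i _ hx _ hy) hcov,
    fun ⟨_, hB, hsep⟩ => exists_patrol_of_int_cover hT hB (fun i _ hx _ hy => hsep i _ hx _ hy)⟩
end

section
/- Suppose positive integers m_1, ..., m_k satisfy 1/m_1 + ... + 1/m_k = 1. Then there exist integers r_1, ..., r_k such that every integer x satisfies x ≡ r_i (mod m_i) for exactly one index i (a disjoint covering system), if and only if (m_1, ..., m_k) is good. -/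
/-!
Let `L = ∏ mᵢ` and `nᵢ = L / mᵢ`, so that `∑ nᵢ = L`. An `mᵢ`-separated set meets a window of
`L` consecutive integers in at most `nᵢ` points, while a cover of `ℤ` meets it at least `L`
times in total. Hence the window is covered exactly once and meets `Sᵢ` in exactly `nᵢ` points.
Cutting the window into `nᵢ` blocks of length `mᵢ`, each block contains exactly one point of `Sᵢ`;
since every block of `mᵢ` consecutive integers starts such a window, `Sᵢ` is `mᵢ`-periodic with one
point per period, i.e. a residue class mod `mᵢ`. Conversely, residue classes mod `mᵢ` are
`mᵢ`-separated.
-/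

open Finset

def SeparatedBy (m : ℕ) (S : Set ℤ) : Prop :=
  ∀ t₁ ∈ S, ∀ t₂ ∈ S, t₁ ≠ t₂ → (m : ℤ) ≤ |t₁ - t₂|

noncomputable def windowCount (S : Set ℤ) [DecidablePred (· ∈ S)] (a : ℤ) (l : ℕ) : ℕ :=
  #{t ∈ Ico a (a + l) | t ∈ S}

section windowCount

variable {S : Set ℤ} [DecidablePred (· ∈ S)]

theorem windowCount_add (a : ℤ) (l₁ l₂ : ℕ) :
    windowCount S a (l₁ + l₂) = windowCount S a l₁ + windowCount S (a + l₁) l₂ := by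
  have hsplit : Ico a (a + ↑(l₁ + l₂)) = Ico a (a + l₁) ∪ Ico (a + l₁) (a + l₁ + l₂) := by
    rw [Ico_union_Ico_eq_Ico (by omega) (by omega), Nat.cast_add, add_assoc]
  rw [windowCount, windowCount, windowCount, hsplit, filter_union,
    card_union_of_disjoint (disjoint_filter_filter (Ico_disjoint_Ico_consecutive _ _ _))]

theorem windowCount_one (a : ℤ) : windowCount S a 1 = if a ∈ S then 1 else 0 := by
  rw [windowCount, Nat.cast_one, show Ico a (a + 1) = {a} by grind, filter_singleton]
  split_ifs <;> rfl

theorem windowCount_le_one {m : ℕ} (hS : SeparatedBy m S) (a : ℤ) : windowCount S a m ≤ 1 := by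
  refine card_le_one.mpr fun t₁ h₁ t₂ h₂ => by_contra fun hne => ?_
  simp only [mem_filter, mem_Ico] at h₁ h₂
  have hclose : |t₁ - t₂| < m := abs_sub_lt_iff.mpr ⟨by omega, by omega⟩
  exact (hS t₁ h₁.2 t₂ h₂.2 hne).not_gt hclose

theorem windowCount_mul_le {m : ℕ} (hS : SeparatedBy m S) (a : ℤ) (n : ℕ) :
    windowCount S a (n * m) ≤ n := by
  induction n generalizing a with
  | zero => simp [windowCount]
  | succ n ih =>
    rw [add_mul, one_mul, windowCount_add]
    linarith [ih a, windowCount_le_one hS (a + ↑(n * m))]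

theorem windowCount_eq_one_of_mul_eq {m n : ℕ} (hS : SeparatedBy m S) (hn : 0 < n) {a : ℤ}
    (h : windowCount S a (n * m) = n) : windowCount S a m = 1 := by
  obtain ⟨n, rfl⟩ := Nat.exists_eq_add_of_lt hn
  rw [zero_add, add_comm, add_mul, one_mul, windowCount_add] at h
  linarith [windowCount_le_one hS a, windowCount_mul_le hS (a + m) n]

-- Splitting `[x, x + 1 + m)` at `x + 1` and at `x + m` gives `[x ∈ S] + 1 = 1 + [x + m ∈ S]`.
theorem periodic_mem_of_windowCount_eq_one {m : ℕ} (h : ∀ a, windowCount S a m = 1) :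
    Function.Periodic (· ∈ S) (m : ℤ) := by
  intro x
  have hcount := windowCount_add (S := S) x 1 m
  rw [add_comm 1 m, windowCount_add, h, h, windowCount_one, windowCount_one] at hcount
  simp only [eq_iff_iff]
  split_ifs at hcount <;> tauto

theorem exists_residue_of_windowCount_eq_one {m : ℕ} (hm : 0 < m)
    (h : ∀ a, windowCount S a m = 1) : ∃ r, ∀ x, x ∈ S ↔ (m : ℤ) ∣ x - r := by
  obtain ⟨r, hr⟩ := card_eq_one.mp (h 0)
  have hmem : ∀ t, t ∈ S ∧ 0 ≤ t ∧ t < m ↔ t = r := fun t => by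
    simpa [and_comm] using congrArg (t ∈ ·) hr
  refine ⟨r, fun x => ?_⟩
  have hmod : x ∈ S ↔ x % m ∈ S := by
    conv_lhs => rw [← Int.emod_add_ediv_mul x m]
    exact iff_of_eq ((periodic_mem_of_windowCount_eq_one h).int_mul _ _)
  have hm' : (0 : ℤ) < m := by exact_mod_cast hm
  have hr_mem := (hmem r).mpr rfl
  rw [hmod, ← Int.modEq_iff_dvd, Int.ModEq, Int.emod_eq_of_lt hr_mem.2.1 hr_mem.2.2, eq_comm,
    ← hmem]
  simp [Int.emod_nonneg _ hm'.ne', Int.emod_lt_of_pos _ hm']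

end windowCount

theorem separatedBy_residueClass (m : ℕ) (r : ℤ) : SeparatedBy m {x | (m : ℤ) ∣ x - r} :=
  fun t₁ h₁ t₂ h₂ hne => Int.le_of_dvd (abs_pos.mpr (sub_ne_zero.mpr hne))
    ((dvd_abs _ _).mpr (by simpa using dvd_sub h₁ h₂))

theorem sum_div_eq_of_sum_one_div_eq_one {ι : Type*} [Fintype ι] {m : ι → ℕ} {L : ℕ}
    (hmL : ∀ i, m i ∣ L) (hsum : ∑ i, (1 : ℝ) / m i = 1) : ∑ i, L / m i = L := by
  have hcast : ((∑ i, L / m i : ℕ) : ℝ) = L := by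
    push_cast [Nat.cast_div_charZero (hmL _)]
    simp_rw [div_eq_mul_one_div (L : ℝ)]
    rw [← mul_sum, hsum, mul_one]
  exact_mod_cast hcast

section cover

variable {ι : Type*} [Fintype ι] {S : ι → Set ℤ} [∀ i, DecidablePred (· ∈ S i)]

theorem sum_windowCount_eq_sum_card (a : ℤ) (l : ℕ) :
    ∑ i, windowCount (S i) a l = ∑ t ∈ Ico a (a + l), #{i | t ∈ S i} :=
  sum_card_bipartiteAbove_eq_sum_card_bipartiteBelow (r := fun i t => t ∈ S i)

theorem windowCount_eq_of_cover {m n : ι → ℕ} {L : ℕ} (hS : ∀ i, SeparatedBy (m i) (S i))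
    (hcover : ⋃ i, S i = Set.univ) (hnm : ∀ i, n i * m i = L) (hnL : ∑ i, n i = L) (a : ℤ) :
    (∀ i, windowCount (S i) a L = n i) ∧ ∀ t ∈ Ico a (a + L), #{i | t ∈ S i} = 1 := by
  have hle : ∀ i, windowCount (S i) a L ≤ n i := fun i =>
    hnm i ▸ windowCount_mul_le (hS i) a (n i)
  have hpos : ∀ t, 1 ≤ #{i | t ∈ S i} := fun t => by
    obtain ⟨i, hi⟩ := Set.mem_iUnion.mp (hcover ▸ Set.mem_univ t)
    exact card_pos.mpr ⟨i, mem_filter.mpr ⟨mem_univ i, hi⟩⟩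
  have hwindow : ∑ t ∈ Ico a (a + L), 1 = L := by simp
  have hupper : ∑ i, windowCount (S i) a L ≤ ∑ i, n i := sum_le_sum fun i _ => hle i
  have hlower : ∑ t ∈ Ico a (a + L), 1 ≤ ∑ t ∈ Ico a (a + L), #{i | t ∈ S i} :=
    sum_le_sum fun t _ => hpos t
  have hdouble := sum_windowCount_eq_sum_card (S := S) a L
  exact ⟨fun i => (sum_eq_sum_iff_of_le fun i _ => hle i).mp (by omega) i (mem_univ i),
    fun t ht => ((sum_eq_sum_iff_of_le fun t _ => hpos t).mp (by omega) t ht).symm⟩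

end cover

/-- when `∑ 1/(m i) = 1`, a disjoint covering system with moduli
`m i` exists iff `(m 1, …, m k)` is good. -/
theorem stmt_8 (k : ℕ) (m : Fin k → ℕ) (hm : ∀ i, 0 < m i)
    (hsum : ∑ i, (1 : ℝ) / m i = 1) :
    (∃ r : Fin k → ℤ, ∀ x : ℤ, ∃! i, (m i : ℤ) ∣ x - r i) ↔
    (∃ S : Fin k → Set ℤ, (⋃ i, S i) = Set.univ ∧
      ∀ i, ∀ t₁ ∈ S i, ∀ t₂ ∈ S i, t₁ ≠ t₂ → ((m i : ℤ) ≤ |t₁ - t₂|)) := by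
  constructor
  · rintro ⟨r, hr⟩
    refine ⟨fun i => {x | (m i : ℤ) ∣ x - r i}, ?_, fun i => separatedBy_residueClass (m i) (r i)⟩
    exact Set.eq_univ_of_forall fun x => Set.mem_iUnion.mpr (hr x).exists
  · rintro ⟨S, hcover, hsep⟩
    classical
    set L := ∏ i, m i
    have hmL : ∀ i, m i ∣ L := fun i => dvd_prod_of_mem m (mem_univ i)
    have hL : 0 < L := prod_pos fun i _ => hm i
    have hnm : ∀ i, L / m i * m i = L := fun i => Nat.div_mul_cancel (hmL i)
    have hcount :=
      windowCount_eq_of_cover hsep hcover hnm (sum_div_eq_of_sum_one_div_eq_one hmL hsum)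
    have hclass : ∀ i, ∃ r, ∀ x, x ∈ S i ↔ (m i : ℤ) ∣ x - r := fun i =>
      exists_residue_of_windowCount_eq_one (hm i) fun a =>
        windowCount_eq_one_of_mul_eq (hsep i) (Nat.div_pos (Nat.le_of_dvd hL (hmL i)) (hm i))
          ((hnm i).symm ▸ (hcount a).1 i)
    choose r hr using hclass
    refine ⟨r, fun x => ?_⟩
    simp_rw [← hr, Fintype.existsUnique_iff_card_one]
    exact (hcount x).2 x (by simp [hL])
end

section
/- Point patrolling admits a polynomial-ratio-2 bound: let a_1, ..., a_k be positive reals, let x be the infimum of idle times T achievable by agents with minimum revisit intervals a_1, ..., a_k patrolling a point, and let y be the unique positive real with y/a_1 + ... + y/a_k = 1. Then y ≤ x and the idle time 2y is achievable. -/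
/-!
Lower bound: `M` consecutive windows of length `T` contain `M` distinct visits, whereas agent `i`
visits `[0, M T)` at most `M T / a i + 1` times; hence `M ≤ M T ∑ 1 / a i + k` for every `M`,
so `T ∑ 1 / a i ≥ 1`, i.e. `T ≥ y`.

Upper bound: round each `a i` up to `2 y · 2 ^ e i` with `2 ^ (-e i) ≥ y / a i`. Then
`∑ 2 ^ (-e i) ≥ 1`, and by a converse of Kraft's inequality there are residues `r i` such that the
classes `r i mod 2 ^ e i` cover `ℤ` (merge two classes of the largest modulus into one and
induct). Agent `i` visits at the times `2 y m` with `m ≡ r i`.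
-/

/-- Agents with minimum revisit intervals `a` patrol a point with idle time `T`. -/
def PatrolsPoint {k : ℕ} (a : Fin k → ℝ) (T : ℝ) : Prop :=
  ∃ S : Fin k → Set ℝ,
    (∀ i, ∀ t₁ ∈ S i, ∀ t₂ ∈ S i, t₁ ≠ t₂ → a i ≤ |t₁ - t₂|) ∧
    (∀ t : ℝ, ∃ i, ∃ t' ∈ Set.Ico t (t + T), t' ∈ S i)

def IsCoveringSystem {ι : Type*} (s : Finset ι) (e : ι → ℕ) (r : ι → ℤ) : Prop :=
  ∀ m : ℤ, ∃ i ∈ s, (2 : ℤ) ^ e i ∣ m - r i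

lemma two_pow_succ_dvd_or_dvd_sub_of_dvd {n : ℤ} {E : ℕ} (h : (2 : ℤ) ^ E ∣ n) :
    (2 : ℤ) ^ (E + 1) ∣ n ∨ (2 : ℤ) ^ (E + 1) ∣ n - 2 ^ E := by
  obtain ⟨q, rfl⟩ := h
  rcases Int.even_or_odd q with ⟨q', rfl⟩ | ⟨q', rfl⟩
  · exact Or.inl ⟨q', by ring⟩
  · exact Or.inr ⟨q', by ring⟩

section CoveringSystem

variable {ι : Type*} {s t : Finset ι} {e : ι → ℕ} {r : ι → ℤ}

lemma one_le_sum_inv_two_pow {D : ℕ}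
    (he : ∀ j ∈ t, e j ≤ D) (h : 1 - ((2 : ℝ) ^ D)⁻¹ < ∑ j ∈ t, ((2 : ℝ) ^ e j)⁻¹) :
    1 ≤ ∑ j ∈ t, ((2 : ℝ) ^ e j)⁻¹ := by
  set n := ∑ j ∈ t, 2 ^ (D - e j) with hn
  have hscale : (2 : ℝ) ^ D * ∑ j ∈ t, ((2 : ℝ) ^ e j)⁻¹ = n := by
    rw [Finset.mul_sum, hn]
    push_cast
    refine Finset.sum_congr rfl fun j hj => ?_
    rw [← Nat.sub_add_cancel (he j hj), pow_add, Nat.add_sub_cancel]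
    field_simp
  have hD : (0 : ℝ) < 2 ^ D := by positivity
  have hlt : ((2 ^ D - 1 : ℕ) : ℝ) < n := by
    rw [Nat.cast_sub Nat.one_le_two_pow, ← hscale]
    push_cast
    nlinarith [mul_inv_cancel₀ hD.ne']
  have hle : ((2 ^ D : ℕ) : ℝ) ≤ n := by
    have : 2 ^ D - 1 < n := by exact_mod_cast hlt
    exact_mod_cast (by omega : 2 ^ D ≤ n)
  rw [← hscale] at hle
  push_cast at hle
  nlinarith

lemma IsCoveringSystem.mono (h : IsCoveringSystem s e r) (hst : s ⊆ t) :
    IsCoveringSystem t e r := fun m =>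
  let ⟨i, hi, hdvd⟩ := h m
  ⟨i, hst hi, hdvd⟩

variable [DecidableEq ι]

/-- Two classes mod `2 ^ (E + 1)` that differ by `2 ^ E` make up one class mod `2 ^ E`. -/
lemma IsCoveringSystem.split {i j : ι} {E : ℕ} (hij : i ≠ j) (hi : e i = E + 1)
    (hj : e j = E + 1) (hjs : j ∈ s) (h : IsCoveringSystem (s.erase j) (Function.update e i E) r) :
    IsCoveringSystem s e (Function.update r j (r i + 2 ^ E)) := by
  intro m
  obtain ⟨l, hl, hdvd⟩ := h m
  by_cases hli : l = i
  · subst hli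
    rw [Function.update_self] at hdvd
    rcases two_pow_succ_dvd_or_dvd_sub_of_dvd hdvd with hl' | hj'
    · exact ⟨l, Finset.mem_of_mem_erase hl, by rwa [hi, Function.update_of_ne hij]⟩
    · exact ⟨j, hjs, by rwa [hj, Function.update_self, sub_add_eq_sub_sub]⟩
  · have hlj : l ≠ j := Finset.ne_of_mem_erase hl
    refine ⟨l, Finset.mem_of_mem_erase hl, ?_⟩
    rwa [Function.update_of_ne hlj, ← Function.update_of_ne hli E e]

theorem exists_isCoveringSystem (s : Finset ι) (e : ι → ℕ)
    (h : 1 ≤ ∑ i ∈ s, ((2 : ℝ) ^ e i)⁻¹) : ∃ r, IsCoveringSystem s e r := by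
  induction s using Finset.strongInduction generalizing e with
  | H s ih =>
  have hs : s.Nonempty :=
    Finset.nonempty_of_sum_ne_zero (f := fun i => ((2 : ℝ) ^ e i)⁻¹) (by linarith)
  obtain ⟨i, hi, hmax⟩ := s.exists_max_image e hs
  by_cases hi0 : e i = 0
  · exact ⟨0, fun m => ⟨i, hi, by simp [hi0]⟩⟩
  obtain ⟨D, hD⟩ := Nat.exists_eq_add_one_of_ne_zero hi0
  by_cases htwin : ∃ j ∈ s, j ≠ i ∧ e j = D + 1
  · obtain ⟨j, hj, hji, hjD⟩ := htwin
    have hi' : i ∈ s.erase j := Finset.mem_erase.2 ⟨hji.symm, hi⟩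
    have hsum : ∑ l ∈ s.erase j, ((2 : ℝ) ^ Function.update e i D l)⁻¹ =
        ∑ l ∈ s, ((2 : ℝ) ^ e l)⁻¹ := by
      rw [← Finset.add_sum_erase _ _ hi', ← Finset.add_sum_erase s _ hj,
        ← Finset.add_sum_erase (s.erase j) _ hi', Function.update_self, hD, hjD, ← add_assoc]
      congr 1
      · rw [pow_succ]; ring
      · exact Finset.sum_congr rfl fun l hl => by
          rw [Function.update_of_ne (Finset.ne_of_mem_erase hl)]
    obtain ⟨r, hr⟩ := ih (s.erase j) (Finset.erase_ssubset hj) _ (hsum ▸ h)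
    exact ⟨_, hr.split hji.symm hD hjD hj⟩
  · push Not at htwin
    -- Without a twin, `i` is the only class of the largest modulus `2 ^ (D + 1)`, so by parity
    -- the other classes already have density sum at least one.
    have hle : ∀ l ∈ s.erase i, e l ≤ D := fun l hl => by
      have := hmax l (Finset.mem_of_mem_erase hl)
      have := htwin l (Finset.mem_of_mem_erase hl) (Finset.ne_of_mem_erase hl)
      omega
    have hgt : 1 - ((2 : ℝ) ^ D)⁻¹ < ∑ l ∈ s.erase i, ((2 : ℝ) ^ e l)⁻¹ := by
      rw [← Finset.add_sum_erase s _ hi, hD, pow_succ] at h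
      have : (0 : ℝ) < (2 ^ D)⁻¹ := by positivity
      rw [mul_inv] at h
      linarith
    obtain ⟨r, hr⟩ := ih (s.erase i) (Finset.erase_ssubset hi) e (one_le_sum_inv_two_pow hle hgt)
    exact ⟨r, hr.mono (Finset.erase_subset i s)⟩

end CoveringSystem

lemma card_le_div_add_one_of_separated {s : Finset ℝ} {a L : ℝ} (ha : 0 < a) (hL : 0 ≤ L)
    (hs : ∀ x ∈ s, x ∈ Set.Ico 0 L) (hsep : (s : Set ℝ).Pairwise fun x y => a ≤ |x - y|) :
    (s.card : ℝ) ≤ L / a + 1 := by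
  have hcard : s.card ≤ (Finset.range (⌊L / a⌋₊ + 1)).card := by
    refine Finset.card_le_card_of_injOn (fun x => ⌊x / a⌋₊) (fun x hx => ?_)
      (fun x hx y hy hxy => ?_)
    · exact Finset.mem_range_succ_iff.2 <|
        Nat.floor_le_floor (div_le_div_of_nonneg_right (hs x hx).2.le ha.le)
    · by_contra hne
      have hfloor : ⌊x / a⌋ = ⌊y / a⌋ := by
        rw [← Int.natCast_floor_eq_floor (div_nonneg (hs x hx).1 ha.le),
          ← Int.natCast_floor_eq_floor (div_nonneg (hs y hy).1 ha.le)]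
        exact congrArg _ hxy
      have hlt : |x / a - y / a| < 1 := Int.abs_sub_lt_one_of_floor_eq_floor hfloor
      rw [← sub_div, abs_div, abs_of_pos ha, div_lt_one ha] at hlt
      exact (hsep hx hy hne).not_gt hlt
  calc (s.card : ℝ) ≤ ⌊L / a⌋₊ + 1 := by rw [Finset.card_range] at hcard; exact_mod_cast hcard
    _ ≤ L / a + 1 := by gcongr; exact Nat.floor_le (div_nonneg hL ha.le)

namespace PatrolsPoint

variable {k : ℕ} {a : Fin k → ℝ} {T : ℝ}

lemma pos (h : PatrolsPoint a T) : 0 < T := by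
  obtain ⟨_, _, hcov⟩ := h
  obtain ⟨-, t', ht', -⟩ := hcov 0
  linarith [ht'.1, ht'.2]

lemma natCast_le (ha : ∀ i, 0 < a i) (h : PatrolsPoint a T) (M : ℕ) :
    (M : ℝ) ≤ M * T * ∑ i, (a i)⁻¹ + k := by
  have hT := h.pos
  obtain ⟨S, hsep, hcov⟩ := h
  choose I p hp hpS using fun j : Fin M => hcov (j * T)
  have hmono : StrictMono p := fun j j' hjj' => by
    have : (j : ℝ) + 1 ≤ j' := by exact_mod_cast hjj'
    nlinarith [(hp j).2, (hp j').1]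
  have hrange : ∀ j, p j ∈ Set.Ico 0 (M * T) := fun j => by
    have : (j : ℝ) + 1 ≤ M := by exact_mod_cast j.isLt
    constructor <;> nlinarith [(hp j).1, (hp j).2]
  have hfiber : ∀ i, ((Finset.univ.filter (I · = i)).card : ℝ) ≤ M * T / a i + 1 := fun i => by
    rw [← Finset.card_image_of_injective _ hmono.injective]
    refine card_le_div_add_one_of_separated (ha i) (by positivity) ?_ ?_
    · simp only [Finset.mem_image]
      rintro _ ⟨j, -, rfl⟩
      exact hrange j
    · simp only [Finset.coe_image, Finset.coe_filter]
      rintro _ ⟨j, hj, rfl⟩ _ ⟨j', hj', rfl⟩ hne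
      exact hsep i _ (hj.2 ▸ hpS j) _ (hj'.2 ▸ hpS j') hne
  calc (M : ℝ) = ∑ i, ((Finset.univ.filter (I · = i)).card : ℝ) := by
        rw [← Nat.cast_sum, ← Finset.card_eq_sum_card_fiberwise fun j _ => Finset.mem_univ (I j)]
        simp
    _ ≤ ∑ i, (M * T / a i + 1) := Finset.sum_le_sum fun i _ => hfiber i
    _ = M * T * ∑ i, (a i)⁻¹ + k := by
        simp [Finset.sum_add_distrib, Finset.mul_sum, div_eq_mul_inv]

lemma one_le_mul_sum_inv (ha : ∀ i, 0 < a i) (h : PatrolsPoint a T) :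
    1 ≤ T * ∑ i, (a i)⁻¹ := by
  by_contra! hlt
  obtain ⟨M, hM⟩ := exists_nat_gt (k / (1 - T * ∑ i, (a i)⁻¹))
  rw [div_lt_iff₀ (by linarith)] at hM
  linarith [h.natCast_le ha M]

lemma le_of_sum_div_eq_one (ha : ∀ i, 0 < a i) (h : PatrolsPoint a T) {y : ℝ}
    (hsum : ∑ i, y / a i = 1) : y ≤ T := by
  have hy : y * ∑ i, (a i)⁻¹ = 1 := by simpa [Finset.mul_sum, div_eq_mul_inv] using hsum
  have hw : 0 < ∑ i, (a i)⁻¹ :=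
    lt_of_le_of_ne (Finset.sum_nonneg fun i _ => (inv_pos.2 (ha i)).le)
      fun h0 => by simp [← h0] at hy
  exact le_of_mul_le_mul_right (hy ▸ h.one_le_mul_sum_inv ha) hw

end PatrolsPoint

lemma patrolsPoint_of_isCoveringSystem {k : ℕ} {a : Fin k → ℝ} {c : ℝ} {e : Fin k → ℕ}
    {r : Fin k → ℤ} (hc : 0 < c) (hae : ∀ i, a i ≤ 2 ^ e i * c)
    (hr : IsCoveringSystem Finset.univ e r) : PatrolsPoint a c := by
  refine ⟨fun i => (fun m : ℤ => c * m) '' {m | (2 : ℤ) ^ e i ∣ m - r i}, ?_, fun t => ?_⟩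
  · rintro i _ ⟨m, hm, rfl⟩ _ ⟨m', hm', rfl⟩ hne
    have hmm' : m - m' ≠ 0 := sub_ne_zero.2 fun h => hne (h ▸ rfl)
    have hdvd : (2 : ℤ) ^ e i ≤ |m - m'| :=
      Int.le_of_dvd (abs_pos.2 hmm') ((dvd_abs _ _).2 (by simpa using dvd_sub hm hm'))
    calc a i ≤ 2 ^ e i * c := hae i
      _ ≤ |(m : ℝ) - m'| * c := by gcongr; exact_mod_cast hdvd
      _ = |c * m - c * m'| := by rw [← mul_sub, abs_mul, abs_of_pos hc, mul_comm]
  · obtain ⟨i, -, hi⟩ := hr ⌈t / c⌉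
    refine ⟨i, c * ⌈t / c⌉, ⟨?_, ?_⟩, ⌈t / c⌉, hi, rfl⟩
    · rw [← div_le_iff₀' hc]
      exact Int.le_ceil _
    · have := Int.ceil_lt_add_one (t / c)
      rw [← lt_div_iff₀' hc, add_div, div_self hc.ne']
      exact this

theorem patrolsPoint_two_mul {k : ℕ} {a : Fin k → ℝ} (ha : ∀ i, 0 < a i) {y : ℝ} (hy : 0 < y)
    (hsum : ∑ i, y / a i = 1) : PatrolsPoint a (2 * y) := by
  have hya : ∀ i, 1 ≤ a i / y := fun i => by
    have : y / a i ≤ 1 := hsum ▸ Finset.single_le_sum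
      (fun j _ => (div_pos hy (ha j)).le) (Finset.mem_univ i)
    rwa [div_le_one (ha i), ← one_le_div hy] at this
  choose e he using fun i => exists_nat_pow_near (hya i) one_lt_two
  have hkraft : 1 ≤ ∑ i, ((2 : ℝ) ^ e i)⁻¹ := hsum ▸ Finset.sum_le_sum fun i _ => by
    rw [← inv_div]
    exact inv_anti₀ (by positivity) (he i).1
  obtain ⟨r, hr⟩ := exists_isCoveringSystem Finset.univ e hkraft
  refine patrolsPoint_of_isCoveringSystem (by positivity) (fun i => ?_) hr
  have := (he i).2
  rw [div_lt_iff₀ hy, pow_succ] at this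
  linarith

/-- if `x` is the infimum of achievable idle times and `y` satisfies
`∑ y / a i = 1`, then `y ≤ x` and idle time `2y` is achievable. -/
theorem stmt_11 (k : ℕ) (a : Fin k → ℝ) (ha : ∀ i, 0 < a i)
    (y : ℝ) (hy : 0 < y) (hsum : ∑ i, y / a i = 1) :
    y ≤ sInf {T : ℝ | 0 < T ∧ PatrolsPoint a T} ∧ PatrolsPoint a (2 * y) := by
  have hpat : PatrolsPoint a (2 * y) := patrolsPoint_two_mul ha hy hsum
  exact ⟨le_csInf ⟨2 * y, by positivity, hpat⟩ fun T hT => hT.2.le_of_sum_div_eq_one ha hsum, hpat⟩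
end

section
/- If there exists a (c, k)-sequence, then k agents with speed limits 1, 1/2, ..., 1/k can patrol a circle of perimeter c/2 unidirectionally (moving only clockwise) with idle time 1. -/
/-!
Identify a point of the circle `ℝ/(c/2)ℤ` with the parameters `u` such that the point is
`(c/2) u`; every point has one parameter in each window `[2t, 2t + 1)`, so it suffices that
every `u` is visited at a time in `[u/2, (u + 1)/2]`. Agent `i` (speed `1/I`, `I = i + 1`) takes
care of the parameters in `S_i = ⋃ [a_j, b_j]`: at time `a_j/2` it starts at `(c/2)(a_j - j)` and
runs at full speed, so it is at `(c/2)(u - j)` at time `a_j/2 + (Ic/2)(u - a_j)`, which lies in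
`[u/2, (u + 1)/2]` because `(b_j - a_j)(cI - 1) ≤ 1`. The same inequality lets it finish the arc
by time `(b_j + 1)/2 = a_{j+1}/2`, and the shift by `-j` turns the unit gap into one full lap, so
arc `j + 1` starts where arc `j` ends. The schedule is the infimum of the "pieces" (wait at the
start of arc `j` until `a_j/2`, then run forever); an infimum of monotone `1/I`-Lipschitz
functions is again one, and at the times above it coincides with the piece of the current arc.
-/

/-- `S` is a `(c, k)`-sequence: the sets cover `ℝ`, and each `S i` (agent `i+1`)
is a union of non-overlapping closed intervals of length at most `1/(c(i+1) − 1)`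
with gaps of exactly 1 between consecutive intervals. -/
def IsCKSeq (c : ℝ) (k : ℕ) (S : Fin k → Set ℝ) : Prop :=
  (⋃ i, S i) = Set.univ ∧
  ∀ i : Fin k, ∃ a b : ℤ → ℝ,
    S i = (⋃ j : ℤ, Set.Icc (a j) (b j)) ∧
    (∀ j, a j ≤ b j) ∧
    (∀ j, b j - a j ≤ 1 / (c * ((i : ℕ) + 1) - 1)) ∧
    (∀ j, a (j + 1) - b j = 1)

/-- `k` agents, agent `i` with speed limit `v i`, patrol a circle of perimeter `P`
unidirectionally (clockwise only) with idle time 1; `f i` is the lift of the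
motion of agent `i` to `ℝ`. -/
def PatrolsCircle {k : ℕ} (v : Fin k → ℝ) (P : ℝ) : Prop :=
  ∃ f : Fin k → ℝ → ℝ,
    (∀ i, Monotone (f i)) ∧
    (∀ i, ∀ s t : ℝ, s ≤ t → f i t - f i s ≤ v i * (t - s)) ∧
    (∀ x t : ℝ, ∃ i, ∃ t' ∈ Set.Ico t (t + 1), ∃ m : ℤ, f i t' = x + m * P)

open Set

structure UnitGapIntervals (a b : ℤ → ℝ) (ℓ : ℝ) : Prop where
  le : ∀ j, a j ≤ b j
  length_le : ∀ j, b j - a j ≤ ℓ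
  gap : ∀ j, a (j + 1) - b j = 1

noncomputable def patrolPiece (c I : ℝ) (a : ℤ → ℝ) (j : ℤ) (t : ℝ) : ℝ :=
  c / 2 * (a j - j) + max (t - a j / 2) 0 / I

noncomputable def patrolPath (c I : ℝ) (a : ℤ → ℝ) (t : ℝ) : ℝ :=
  ⨅ j, patrolPiece c I a j t

lemma patrolPiece_mono {c I : ℝ} (hI : 0 ≤ I) (a : ℤ → ℝ) (j : ℤ) :
    Monotone (patrolPiece c I a j) := fun s t hst => by
  unfold patrolPiece
  gcongr

lemma patrolPiece_sub_le {c I : ℝ} (hI : 0 ≤ I) (a : ℤ → ℝ) (j : ℤ) {s t : ℝ} (hst : s ≤ t) :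
    patrolPiece c I a j t - patrolPiece c I a j s ≤ 1 / I * (t - s) := by
  have hmax : max (t - a j / 2) 0 ≤ max (s - a j / 2) 0 + (t - s) :=
    max_le (by linarith [le_max_left (s - a j / 2) 0]) (by linarith [le_max_right (s - a j / 2) 0])
  have := div_le_div_of_nonneg_right hmax hI
  unfold patrolPiece
  rw [add_div] at this
  linarith [one_div_mul_eq_div I (t - s)]

lemma le_patrolPiece {c I : ℝ} (hI : 0 ≤ I) (a : ℤ → ℝ) (j : ℤ) (t : ℝ) :
    c / 2 * (a j - j) ≤ patrolPiece c I a j t := by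
  unfold patrolPiece
  have : 0 ≤ max (t - a j / 2) 0 / I := by positivity
  linarith

namespace UnitGapIntervals

variable {a b : ℤ → ℝ} {ℓ c I : ℝ}

lemma sub_monotone (h : UnitGapIntervals a b ℓ) : Monotone fun j : ℤ => a j - j :=
  monotone_int_of_le_succ fun j => by
    have := h.gap j
    have := h.le j
    push_cast
    linarith

lemma exists_le (h : UnitGapIntervals a b ℓ) (x : ℝ) : ∃ J : ℤ, a J ≤ x := by
  refine ⟨min 0 ⌊x - a 0⌋, ?_⟩
  have hA := h.sub_monotone (min_le_left 0 ⌊x - a 0⌋)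
  have hmin : ((min 0 ⌊x - a 0⌋ : ℤ) : ℝ) ≤ ⌊x - a 0⌋ := by exact_mod_cast min_le_right _ _
  have := Int.floor_le (x - a 0)
  simp only [Int.cast_zero, sub_zero] at hA
  linarith

lemma length_mul_le_one (h : UnitGapIntervals a b (1 / (c * I - 1))) (hcI : 1 < c * I) (j : ℤ) :
    (b j - a j) * (c * I - 1) ≤ 1 :=
  (le_div_iff₀ (by linarith)).1 (h.length_le j)

/-- Arc `j` is finished by the time arc `j + 1` starts. -/
lemma patrolPiece_succ_le (h : UnitGapIntervals a b (1 / (c * I - 1))) (hI : 0 < I)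
    (hcI : 1 < c * I) {j : ℤ} {t : ℝ} (ht : a (j + 1) ≤ 2 * t) :
    patrolPiece c I a (j + 1) t ≤ patrolPiece c I a j t := by
  have hgap := h.gap j
  have hmax : ∀ j', a j' ≤ a (j + 1) → max (t - a j' / 2) 0 = t - a j' / 2 :=
    fun j' hj' => max_eq_left (by linarith)
  have key : patrolPiece c I a j t - patrolPiece c I a (j + 1) t
      = (1 - (b j - a j) * (c * I - 1)) / (2 * I) := by
    unfold patrolPiece
    rw [hmax j (by linarith [h.le j]), hmax (j + 1) le_rfl, show a (j + 1) = b j + 1 by linarith]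
    push_cast
    field_simp
    ring
  have : 0 ≤ (1 - (b j - a j) * (c * I - 1)) / (2 * I) :=
    div_nonneg (by linarith [h.length_mul_le_one hcI j]) (by positivity)
  linarith

lemma antitoneOn_patrolPiece (h : UnitGapIntervals a b (1 / (c * I - 1))) (hI : 0 < I)
    (hcI : 1 < c * I) {J : ℤ} {t : ℝ} (ht : a J ≤ 2 * t) :
    AntitoneOn (fun j => patrolPiece c I a j t) (Iic J) :=
  antitoneOn_of_add_one_le ordConnected_Iic fun j _ _ hj1 =>
    h.patrolPiece_succ_le hI hcI
      (le_trans (by linarith [h.sub_monotone hj1, (Int.cast_le (R := ℝ)).2 hj1]) ht)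

lemma bddBelow_range_patrolPiece (h : UnitGapIntervals a b (1 / (c * I - 1))) (hI : 0 < I)
    (hcI : 1 < c * I) (t : ℝ) : BddBelow (range fun j => patrolPiece c I a j t) := by
  have hc : 0 ≤ c := by nlinarith
  obtain ⟨J, hJ⟩ := h.exists_le (2 * t)
  refine ⟨c / 2 * (a J - J), ?_⟩
  rintro _ ⟨j, rfl⟩
  rcases le_total j J with hj | hj
  · exact (le_patrolPiece hI.le a J t).trans
      (h.antitoneOn_patrolPiece hI hcI hJ hj (le_refl J) hj)
  · exact (mul_le_mul_of_nonneg_left (h.sub_monotone hj) (by positivity)).trans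
      (le_patrolPiece hI.le a j t)

lemma monotone_patrolPath (h : UnitGapIntervals a b (1 / (c * I - 1))) (hI : 0 < I)
    (hcI : 1 < c * I) : Monotone (patrolPath c I a) := fun s _ hst =>
  ciInf_mono (h.bddBelow_range_patrolPiece hI hcI s) fun j => patrolPiece_mono hI.le a j hst

lemma patrolPath_sub_le (h : UnitGapIntervals a b (1 / (c * I - 1))) (hI : 0 < I)
    (hcI : 1 < c * I) {s t : ℝ} (hst : s ≤ t) :
    patrolPath c I a t - patrolPath c I a s ≤ 1 / I * (t - s) := by
  suffices patrolPath c I a t - 1 / I * (t - s) ≤ patrolPath c I a s by linarith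
  refine le_ciInf fun j => ?_
  have := ciInf_le (h.bddBelow_range_patrolPiece hI hcI t) j
  have := patrolPiece_sub_le (c := c) hI.le a j hst
  unfold patrolPath
  linarith

lemma patrolPath_eq (h : UnitGapIntervals a b (1 / (c * I - 1))) (hI : 0 < I)
    (hcI : 1 < c * I) {J : ℤ} {u : ℝ} (hu : u ∈ Icc (a J) (b J)) :
    patrolPath c I a (a J / 2 + I * c / 2 * (u - a J)) = c / 2 * (u - J) := by
  have hc : 0 ≤ c := by nlinarith
  set t := a J / 2 + I * c / 2 * (u - a J) with ht
  have hJt : a J ≤ 2 * t := by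
    have : 0 ≤ I * c / 2 * (u - a J) := mul_nonneg (by positivity) (by linarith [hu.1])
    linarith
  have hpiece : patrolPiece c I a J t = c / 2 * (u - J) := by
    unfold patrolPiece
    rw [max_eq_left (by linarith)]
    field_simp
    ring
  have hleast : ∀ j, patrolPiece c I a J t ≤ patrolPiece c I a j t := by
    intro j
    rcases le_or_gt j J with hj | hj
    · exact h.antitoneOn_patrolPiece hI hcI hJt hj (le_refl J) hj
    · have hnext : c / 2 * (u - J) ≤ c / 2 * (a (J + 1) - (J + 1 : ℤ)) := by
        have := h.gap J
        push_cast
        exact mul_le_mul_of_nonneg_left (by linarith [hu.2]) (by positivity)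
      rw [hpiece]
      exact hnext.trans ((mul_le_mul_of_nonneg_left (h.sub_monotone hj) (by positivity)).trans
        (le_patrolPiece hI.le a j t))
  rw [← hpiece]
  exact le_antisymm (ciInf_le (h.bddBelow_range_patrolPiece hI hcI t) J) (le_ciInf hleast)

lemma exists_patrolPath_eq (h : UnitGapIntervals a b (1 / (c * I - 1))) (hI : 0 < I)
    (hcI : 1 < c * I) {J : ℤ} {u : ℝ} (hu : u ∈ Icc (a J) (b J)) :
    ∃ t ∈ Icc (u / 2) ((u + 1) / 2), patrolPath c I a t = c / 2 * (u - J) := by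
  refine ⟨_, ⟨?_, ?_⟩, h.patrolPath_eq hI hcI hu⟩
  · nlinarith [hu.1]
  · nlinarith [hu.2, h.length_mul_le_one hcI J]

end UnitGapIntervals

/-- if a `(c, k)`-sequence exists, then `k` agents with speed
limits `1, 1/2, …, 1/k` can patrol a circle of perimeter `c/2` unidirectionally. -/
theorem stmt_16 (c : ℝ) (hc : 1 < c) (k : ℕ)
    (h : ∃ S : Fin k → Set ℝ, IsCKSeq c k S) :
    PatrolsCircle (fun i : Fin k => 1 / ((i : ℕ) + 1) : Fin k → ℝ) (c / 2) := by
  obtain ⟨S, hcover, hS⟩ := h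
  choose a b hSab hab hlen hgap using hS
  have hseq i : UnitGapIntervals (a i) (b i) _ := ⟨hab i, hlen i, hgap i⟩
  have hI (i : Fin k) : (0 : ℝ) < (i : ℕ) + 1 := by positivity
  have hcI (i : Fin k) : 1 < c * ((i : ℕ) + 1) :=
    one_lt_mul_of_lt_of_le hc (by simp)
  refine ⟨fun i => patrolPath c ((i : ℕ) + 1) (a i), fun i => (hseq i).monotone_patrolPath (hI i)
    (hcI i), fun i s t => (hseq i).patrolPath_sub_le (hI i) (hcI i), fun x t => ?_⟩
  set n := ⌈2 * t - 2 * x / c⌉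
  have hu : 2 * x / c + n ∈ Ico (2 * t) (2 * t + 1) :=
    ⟨by linarith [Int.le_ceil (2 * t - 2 * x / c)],
      by linarith [Int.ceil_lt_add_one (2 * t - 2 * x / c)]⟩
  obtain ⟨i, hi⟩ := mem_iUnion.1 (hcover ▸ mem_univ (2 * x / c + n))
  obtain ⟨j, hj⟩ := mem_iUnion.1 (hSab i ▸ hi)
  obtain ⟨t', ht', hpath⟩ := (hseq i).exists_patrolPath_eq (hI i) (hcI i) hj
  refine ⟨i, t', ⟨by linarith [hu.1, ht'.1], by linarith [hu.2, ht'.2]⟩, n - j, ?_⟩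
  simp only [hpath, Int.cast_sub]
  field_simp
  ring
end

section
/- If k agents with speed limits 1, 1/2, ..., 1/k can patrol a circle of perimeter c (c > 1) unidirectionally with idle time 1, then there exists a (c, k)-sequence. -/
open Filter Set

structure IsClockwiseMotion (f : ℝ → ℝ) (v : ℝ) : Prop where
  monotone : Monotone f
  sub_le : ∀ s t, s ≤ t → f t - f s ≤ v * (t - s)

def lead (c : ℝ) (f : ℝ → ℝ) (u : ℝ) : ℝ := c * u - f u

namespace IsClockwiseMotion

variable {f : ℝ → ℝ} {v c : ℝ} (hf : IsClockwiseMotion f v)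
include hf

theorem nonneg : 0 ≤ v := by
  have := hf.sub_le 0 1 zero_le_one
  linarith [hf.monotone zero_le_one]

theorem lipschitzWith : LipschitzWith v.toNNReal f := by
  refine LipschitzWith.of_dist_le' fun s t => ?_
  wlog hst : s ≤ t generalizing s t
  · rw [dist_comm, dist_comm s]
    exact this t s (le_of_not_ge hst)
  rw [Real.dist_eq, Real.dist_eq, abs_sub_comm, abs_of_nonneg (sub_nonneg.2 (hf.monotone hst)),
    abs_sub_comm, abs_of_nonneg (sub_nonneg.2 hst)]
  exact hf.sub_le s t hst

theorem mul_sub_le_lead_sub {s t : ℝ} (hst : s ≤ t) :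
    (c - v) * (t - s) ≤ lead c f t - lead c f s := by
  have := hf.sub_le s t hst
  unfold lead
  linarith

theorem lead_sub_le_mul_sub {s t : ℝ} (hst : s ≤ t) : lead c f t - lead c f s ≤ c * (t - s) := by
  have := hf.monotone hst
  unfold lead
  linarith

variable (hvc : v < c)
include hvc

theorem strictMono_lead : StrictMono (lead c f) := fun s t hst => by
  have := hf.mul_sub_le_lead_sub (c := c) hst.le
  nlinarith [sub_pos.2 hvc, sub_pos.2 hst]

theorem surjective_lead : Function.Surjective (lead c f) := by
  have hcv : 0 < c - v := sub_pos.2 hvc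
  refine Continuous.surjective ?_ ?_ ?_
  · exact continuous_const.mul continuous_id |>.sub hf.lipschitzWith.continuous
  · refine tendsto_atTop_mono' _ ?_
      (tendsto_atTop_add_const_left _ (lead c f 0) (tendsto_id.const_mul_atTop hcv))
    filter_upwards [eventually_ge_atTop 0] with u hu
    have := hf.mul_sub_le_lead_sub (c := c) hu
    simp only [id]
    linarith
  · refine tendsto_atBot_mono' _ ?_
      (tendsto_atBot_add_const_left _ (lead c f 0) (tendsto_id.const_mul_atBot hcv))
    filter_upwards [eventually_le_atBot 0] with u hu
    have := hf.mul_sub_le_lead_sub (c := c) hu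
    simp only [id]
    linarith

noncomputable def leadIso : ℝ ≃o ℝ :=
  StrictMono.orderIsoOfSurjective _ (hf.strictMono_lead hvc) (hf.surjective_lead hvc)

noncomputable def overtakeTime (m : ℤ) : ℝ := (hf.leadIso hvc).symm (c * m)

theorem lead_overtakeTime (m : ℤ) : lead c f (hf.overtakeTime hvc m) = c * m :=
  StrictMono.orderIsoOfSurjective_self_symm_apply _ _ _ _

theorem lead_overtakeTime_succ_sub (m : ℤ) :
    lead c f (hf.overtakeTime hvc (m + 1)) - lead c f (hf.overtakeTime hvc m) = c := by
  rw [lead_overtakeTime, lead_overtakeTime]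
  push_cast
  ring

theorem overtakeTime_le_succ (m : ℤ) : hf.overtakeTime hvc m ≤ hf.overtakeTime hvc (m + 1) :=
  (hf.leadIso hvc).symm.monotone (by push_cast; linarith [hf.nonneg.trans_lt hvc])

theorem one_le_overtakeTime_succ_sub (m : ℤ) :
    1 ≤ hf.overtakeTime hvc (m + 1) - hf.overtakeTime hvc m := by
  have hc : 0 < c := hf.nonneg.trans_lt hvc
  have := hf.lead_sub_le_mul_sub (c := c) (hf.overtakeTime_le_succ hvc m)
  rw [lead_overtakeTime_succ_sub] at this
  nlinarith

theorem overtakeTime_succ_sub_sub_one_le (m : ℤ) :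
    hf.overtakeTime hvc (m + 1) - hf.overtakeTime hvc m - 1 ≤ v / (c - v) := by
  have hcv : 0 < c - v := sub_pos.2 hvc
  have := hf.mul_sub_le_lead_sub (c := c) (hf.overtakeTime_le_succ hvc m)
  rw [lead_overtakeTime_succ_sub] at this
  rw [le_div_iff₀ hcv]
  linarith

theorem mem_Icc_overtakeTime {x t : ℝ} {m : ℤ} (hxt : x ≤ t) (htx : t ≤ x + 1)
    (hft : f t = c * x + m * c) :
    x ∈ Icc (hf.overtakeTime hvc (-m)) (hf.overtakeTime hvc (-m + 1) - 1) := by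
  have hx := hf.monotone hxt
  have hx1 := hf.monotone htx
  refine ⟨(hf.leadIso hvc).symm_apply_le.2 ?_, le_sub_iff_add_le.2 <|
    (hf.leadIso hvc).le_symm_apply.2 ?_⟩
  · change _ ≤ lead c f x
    unfold lead
    push_cast
    linarith
  · change lead c f (x + 1) ≤ _
    unfold lead
    push_cast
    linarith

end IsClockwiseMotion

/-- if `k` agents with speed limits `1, 1/2, …, 1/k` can patrol a
circle of perimeter `c > 1` unidirectionally, then a `(c, k)`-sequence exists. -/
theorem stmt_17 (c : ℝ) (hc : 1 < c) (k : ℕ)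
    (h : PatrolsCircle (fun i : Fin k => 1 / ((i : ℕ) + 1) : Fin k → ℝ) c) :
    ∃ S : Fin k → Set ℝ, IsCKSeq c k S := by
  obtain ⟨f, hmono, hspeed, hcover⟩ := h
  have hf (i : Fin k) : IsClockwiseMotion (f i) (1 / ((i : ℕ) + 1)) := ⟨hmono i, hspeed i⟩
  have hvc (i : Fin k) : 1 / ((i : ℕ) + 1 : ℝ) < c :=
    ((div_le_one (by positivity)).2 (by simp)).trans_lt hc
  let q := fun i => (hf i).overtakeTime (hvc i)
  refine ⟨fun i => ⋃ j : ℤ, Icc (q i j) (q i (j + 1) - 1), ?_, fun i =>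
    ⟨q i, fun j => q i (j + 1) - 1, rfl, fun j => ?_, fun j => ?_, fun j => by ring⟩⟩
  · refine eq_univ_of_forall fun x => ?_
    obtain ⟨i, t, ht, m, hm⟩ := hcover (c * x) x
    exact mem_iUnion.2 ⟨i, mem_iUnion.2 ⟨-m,
      (hf i).mem_Icc_overtakeTime (hvc i) ht.1 ht.2.le hm⟩⟩
  · linarith [(hf i).one_le_overtakeTime_succ_sub (hvc i) j]
  · calc q i (j + 1) - 1 - q i j = q i (j + 1) - q i j - 1 := by ring
      _ ≤ 1 / ((i : ℕ) + 1) / (c - 1 / ((i : ℕ) + 1)) :=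
        (hf i).overtakeTime_succ_sub_sub_one_le (hvc i) j
      _ = 1 / (c * ((i : ℕ) + 1) - 1) := by
        rw [div_div, mul_sub, mul_one_div_cancel (by positivity), mul_comm]
end

section
/- The runners strategy works: given speeds v_1 ≥ v_2 ≥ ... ≥ v_k > 0 and any r with 1 ≤ r ≤ k, placing the r fastest agents equidistantly on a circle of perimeter r·v_r and having them all move clockwise at constant speed v_r yields a schedule patrolling the circle with idle time 1. Hence a circle of perimeter max_r r·v_r can be patrolled. -/
/-!
Let `r + 1` runners start at the points `0, u, 2u, …, r u` of a circle of perimeter `(r + 1) u` and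
run clockwise at speed `u`. Runner `j` passes `x` exactly when `t + j ≡ x / u` modulo `r + 1`, so
during every unit time window `[t, t + 1)` some runner passes `x`. Every agent `i ≤ r` is at least
as fast as `v r`, so this is an admissible schedule; the remaining agents stand still.
-/

lemma PatrolsCircle.mono {k : ℕ} {v w : Fin k → ℝ} {P : ℝ} (hvw : ∀ i, v i ≤ w i)
    (h : PatrolsCircle v P) : PatrolsCircle w P := by
  obtain ⟨f, hmono, hlip, hcover⟩ := h
  refine ⟨f, hmono, fun i s t hst => ?_, hcover⟩
  calc f i t - f i s ≤ v i * (t - s) := hlip i s t hst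
    _ ≤ w i * (t - s) := mul_le_mul_of_nonneg_right (hvw i) (sub_nonneg.mpr hst)

lemma exists_runner_mem_Ico {n : ℕ} (hn : 0 < n) (y t : ℝ) :
    ∃ j < n, ∃ t' ∈ Set.Ico t (t + 1), ∃ m : ℤ, t' + j = y + m * n := by
  set z : ℤ := ⌊y - t⌋
  have hn' : (0 : ℤ) < n := by exact_mod_cast hn
  have hlt := Int.emod_lt_of_pos z hn'
  refine ⟨(z % n).toNat, by omega, y - z, ?_, -(z / n), ?_⟩
  · constructor <;> linarith [Int.floor_le (y - t), Int.sub_one_lt_floor (y - t)]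
  · have hz : (z : ℝ) = n * (z / n : ℤ) + (z % n : ℤ) := by
      exact_mod_cast (Int.mul_ediv_add_emod z n).symm
    have hmod : ((z % n).toNat : ℝ) = (z % n : ℤ) := by
      exact_mod_cast Int.toNat_of_nonneg (Int.emod_nonneg z hn'.ne')
    rw [hmod]
    push_cast
    linarith

lemma exists_runner_mem_Ico_of_speed {n : ℕ} (hn : 0 < n) {u : ℝ} (hu : 0 < u) (x t : ℝ) :
    ∃ j < n, ∃ t' ∈ Set.Ico t (t + 1), ∃ m : ℤ, u * (t' + j) = x + m * (n * u) := by
  obtain ⟨j, hj, t', ht', m, h⟩ := exists_runner_mem_Ico hn (x / u) t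
  refine ⟨j, hj, t', ht', m, ?_⟩
  rw [h, mul_add, mul_div_cancel₀ x hu.ne']
  ring

theorem patrolsCircle_runners {k : ℕ} (r : Fin k) {u : ℝ} (hu : 0 < u) :
    PatrolsCircle (fun i => if i ≤ r then u else 0) (((r : ℕ) + 1 : ℝ) * u) := by
  refine ⟨fun i t => if i ≤ r then u * (t + i) else 0, fun i s t hst => ?_, fun i s t hst => ?_,
    fun x t => ?_⟩
  · dsimp only
    split_ifs
    · gcongr
    · rfl
  · dsimp only
    split_ifs
    · linarith
    · simp
  · obtain ⟨j, hj, t', ht', m, h⟩ := exists_runner_mem_Ico_of_speed (n := r + 1) r.succ_pos hu x t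
    have hir : (⟨j, by omega⟩ : Fin k) ≤ r := Fin.mk_le_of_le_val (by omega)
    refine ⟨⟨j, by omega⟩, t', ht', m, ?_⟩
    simp only [if_pos hir]
    exact_mod_cast h

/-- the runners strategy: for speeds `v 1 ≥ v 2 ≥ ⋯ ≥ v k > 0` and
any `r`, the agents can patrol a circle of perimeter `(r+1)·v r` (the `r+1`
fastest agents running equidistantly at speed `v r`), with idle time 1. -/
theorem stmt_18 (k : ℕ) (v : Fin k → ℝ) (hv : ∀ i, 0 < v i)
    (hsorted : ∀ i j : Fin k, i ≤ j → v j ≤ v i) (r : Fin k) :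
    PatrolsCircle v ((((r : ℕ) + 1) : ℝ) * v r) := by
  refine (patrolsCircle_runners r (hv r)).mono fun i => ?_
  split_ifs with hir
  · exact hsorted i r hir
  · exact (hv i).le
end
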